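/- arXiv:2503.00299 — 2 statements merged into one kernel-verified Lean document; each statement's English description precedes it below -/
import Mathlib

section
/- Let H_A, H_B ∈ ℝ^{n×n} be symmetric matrices such that min over U ∈ 𝕆^{n×r} of Tr(Uᵀ H_A U) = 0 and Tr(Uᵀ H_A U) ≥ 0, Tr(Uᵀ H_B U) ≥ 0 for all U ∈ 𝕆^{n×r}. If U_* minimizes max{Tr(Uᵀ H_A U), Tr(Uᵀ H_B U)} over 𝕆^{n×r}, and the analogous minimum for H_B is also 0, then Tr(U_*ᵀ H_A U_*) = Tr(U_*ᵀ H_B U_*). -/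
/-!
Suppose `Tr(U_*ᵀ H_A U_*) > Tr(U_*ᵀ H_B U_*)`. By continuity the `H_B`-term stays below the
`H_A`-term near `U_*`, so `U_*` is a local minimizer of `U ↦ Tr(Uᵀ H_A U)` on the Stiefel manifold.
Local minimizers of such a trace form are global: rotating a unit vector `U c` of the frame towards
a unit vector `v ⊥ range U` gives the first- and second-order conditions `H U = U M`, where
`M = Uᵀ H U`, and `λ_max(M) ≤ vᵀ H v`; writing any frame `W` as `U (Uᵀ W) + B` with
`B ⊥ range U` then yields `Tr M ≤ Tr(Wᵀ H W)`. Hence `Tr(U_*ᵀ H_A U_*) ≤ 0 ≤ Tr(U_*ᵀ H_B U_*)`,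
a contradiction; the other case is symmetric.
-/

open Matrix Real Filter Topology

lemma eq_zero_and_nonneg_of_eventually_nonneg {a b : ℝ}
    (h : ∀ᶠ θ in 𝓝 0, 0 ≤ sin θ ^ 2 * a + 2 * sin θ * cos θ * b) : b = 0 ∧ 0 ≤ a := by
  have hmin : IsLocalMin (fun θ => sin θ ^ 2 * a + 2 * sin θ * cos θ * b) 0 := by
    filter_upwards [h] with θ hθ
    simpa using hθ
  have hderiv : HasDerivAt (fun θ => sin θ ^ 2 * a + 2 * sin θ * cos θ * b) (2 * b) 0 := by
    refine ((((hasDerivAt_sin 0).pow 2).mul_const a).add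
      ((((hasDerivAt_sin 0).const_mul 2).mul (hasDerivAt_cos 0)).mul_const b)).congr_deriv ?_
    simp
  have hb : b = 0 := by linarith [hmin.hasDerivAt_eq_zero hderiv]
  have hsin : ∀ᶠ θ in 𝓝[>] 0, 0 < sin θ :=
    mem_of_superset (Ioo_mem_nhdsGT pi_pos) fun θ hθ => sin_pos_of_pos_of_lt_pi hθ.1 hθ.2
  obtain ⟨θ, hθ, hθpos⟩ := ((h.filter_mono nhdsWithin_le_nhds).and hsin).exists
  subst hb
  exact ⟨rfl, nonneg_of_mul_nonneg_right (by simpa using hθ) (by positivity)⟩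

lemma isLocalMinOn_of_isMinOn_max_of_lt {X β : Type*} [TopologicalSpace X] [LinearOrder β]
    [TopologicalSpace β] [OrderTopology β] {f g : X → β} {s : Set X} {a : X}
    (hmin : IsMinOn (fun x => max (f x) (g x)) s a) (hg : ContinuousWithinAt g s a)
    (hlt : g a < f a) : IsLocalMinOn f s a := by
  filter_upwards [hg.eventually (gt_mem_nhds hlt), self_mem_nhdsWithin] with x hgx hx
  have h := isMinOn_iff.1 hmin x hx
  rw [max_eq_left hlt.le, le_max_iff] at h
  exact h.resolve_right (not_le.2 hgx)

variable {n r k : Type*}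

section Rotation

variable [Fintype r] [Fintype k]

/-- For orthonormal `C` and `V ⊥ range U`, each column of `U * C` is turned by the angle `θ`
towards the matching column of `V`, while `U` is kept fixed on the complement of `range C`. -/
noncomputable def planeRotation (U : Matrix n r ℝ) (C : Matrix r k ℝ) (V : Matrix n k ℝ)
    (θ : ℝ) : Matrix n r ℝ :=
  U + ((cos θ - 1) • (U * C) + sin θ • V) * Cᵀ

variable {U : Matrix n r ℝ} {C : Matrix r k ℝ} {V : Matrix n k ℝ}

lemma planeRotation_zero : planeRotation U C V 0 = U := by
  simp [planeRotation]

lemma continuous_planeRotation : Continuous (planeRotation U C V) := by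
  unfold planeRotation
  fun_prop

end Rotation

variable [Fintype n] [Fintype r] [Fintype k]

def traceForm (H : Matrix n n ℝ) (U : Matrix n r ℝ) : ℝ := (Uᵀ * H * U).trace

lemma continuous_traceForm (H : Matrix n n ℝ) : Continuous (traceForm H : Matrix n r ℝ → ℝ) := by
  unfold traceForm
  fun_prop

lemma trace_transpose_mul_mul_comm {H : Matrix n n ℝ} (hH : H.IsSymm) (X : Matrix n k ℝ)
    (Y : Matrix n r ℝ) (Z : Matrix r k ℝ) :
    (Xᵀ * (H * (Y * Z))).trace = (Zᵀ * (Yᵀ * (H * X))).trace := by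
  rw [← trace_transpose]
  simp only [transpose_mul, transpose_transpose, hH.eq, Matrix.mul_assoc]

lemma trace_transpose_replicateCol_mul_replicateCol (x : n → ℝ) (A : Matrix n r ℝ) (y : r → ℝ) :
    ((replicateCol Unit x)ᵀ * A * replicateCol Unit y).trace = x ⬝ᵥ A *ᵥ y := by
  rw [transpose_replicateCol, Matrix.mul_assoc, ← replicateCol_mulVec,
    replicateRow_mul_replicateCol]
  simp [Matrix.trace]

lemma transpose_replicateCol_mul_self {x : n → ℝ} (hx : x ⬝ᵥ x = 1) :
    (replicateCol Unit x)ᵀ * replicateCol Unit x = 1 := by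
  ext
  simp [transpose_replicateCol, hx]

lemma PosSemidef.trace_mul_transpose_mul_self_nonneg {P : Matrix r r ℝ} (hP : P.PosSemidef)
    (X : Matrix n r ℝ) : 0 ≤ (P * (Xᵀ * X)).trace := by
  rw [← Matrix.mul_assoc, trace_mul_comm, ← Matrix.mul_assoc,
    ← conjTranspose_eq_transpose_of_trivial]
  exact (hP.mul_mul_conjTranspose_same X).trace_nonneg

lemma trace_transpose_mul_self_mul_le {H : Matrix n n ℝ} {U B : Matrix n r ℝ} {μ : ℝ}
    (hgap : ∀ v, Uᵀ *ᵥ v = 0 → μ * (v ⬝ᵥ v) ≤ v ⬝ᵥ H *ᵥ v) (hUB : Uᵀ * B = 0) :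
    μ * (Bᵀ * B).trace ≤ (Bᵀ * H * B).trace := by
  have hBB : (Bᵀ * B).trace = ∑ j, Bᵀ j ⬝ᵥ Bᵀ j := by
    simp only [Matrix.trace, diag, Matrix.mul_apply, dotProduct, transpose_apply]
  have hBHB : (Bᵀ * H * B).trace = ∑ j, Bᵀ j ⬝ᵥ H *ᵥ Bᵀ j := by
    simp only [Matrix.trace, diag, Matrix.mul_apply, dotProduct, mulVec, Finset.sum_mul,
      Finset.mul_sum, transpose_apply]
    refine Finset.sum_congr rfl fun j _ => ?_
    rw [Finset.sum_comm]
    simp only [mul_assoc]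
  rw [hBB, hBHB, Finset.mul_sum]
  exact Finset.sum_le_sum fun j _ => hgap _ (funext fun i => congrFun (congrFun hUB i) j)

variable [DecidableEq k]

lemma traceForm_planeRotation {H : Matrix n n ℝ} (hH : H.IsSymm) {U : Matrix n r ℝ}
    {C : Matrix r k ℝ} (V : Matrix n k ℝ) (hC : Cᵀ * C = 1) (θ : ℝ) :
    traceForm H (planeRotation U C V θ) = traceForm H U
      + sin θ ^ 2 * ((Vᵀ * H * V).trace - (Cᵀ * (Uᵀ * H * U) * C).trace)
      + 2 * sin θ * cos θ * (Vᵀ * H * U * C).trace := by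
  set D := (cos θ - 1) • (U * C) + sin θ • V
  have hexp : traceForm H (U + D * Cᵀ)
      = traceForm H U + 2 * (Cᵀ * (Uᵀ * (H * D))).trace + (Dᵀ * (H * D)).trace := by
    have h1 : (Uᵀ * (H * (D * Cᵀ))).trace = (Cᵀ * (Uᵀ * (H * D))).trace := by
      rw [← Matrix.mul_assoc H, ← Matrix.mul_assoc Uᵀ, trace_mul_comm]
    have h2 : (C * (Dᵀ * (H * U))).trace = (Cᵀ * (Uᵀ * (H * D))).trace := by
      rw [← trace_transpose_mul_mul_comm hH, trace_mul_comm]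
      simp only [Matrix.mul_assoc]
    have h3 : (C * (Dᵀ * (H * (D * Cᵀ)))).trace = (Dᵀ * (H * D)).trace := by
      rw [trace_mul_comm]
      simp only [Matrix.mul_assoc, hC, Matrix.mul_one]
    simp only [traceForm, transpose_add, transpose_mul, transpose_transpose, Matrix.add_mul,
      Matrix.mul_add, trace_add, Matrix.mul_assoc, h1, h2, h3]
    ring
  change traceForm H (U + D * Cᵀ) = _
  rw [hexp]
  simp only [D, transpose_add, transpose_smul, transpose_mul, Matrix.add_mul, Matrix.mul_add,
    Matrix.smul_mul, Matrix.mul_smul, trace_add, trace_smul, smul_eq_mul, Matrix.mul_assoc,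
    trace_transpose_mul_mul_comm hH V U C]
  linear_combination (Cᵀ * (Uᵀ * (H * (U * C)))).trace * sin_sq_add_cos_sq θ

variable [DecidableEq r]

def stiefel (n r : Type*) [Fintype n] [DecidableEq r] : Set (Matrix n r ℝ) := {U | Uᵀ * U = 1}

lemma planeRotation_mem_stiefel {U : Matrix n r ℝ} {C : Matrix r k ℝ} {V : Matrix n k ℝ}
    (hU : U ∈ stiefel n r) (hC : Cᵀ * C = 1) (hV : Vᵀ * V = 1) (hUV : Uᵀ * V = 0) (θ : ℝ) :
    planeRotation U C V θ ∈ stiefel n r := by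
  have hVU : Vᵀ * U = 0 := by rw [← transpose_transpose U, ← transpose_mul, hUV, transpose_zero]
  set D := (cos θ - 1) • (U * C) + sin θ • V
  have hUD : Uᵀ * D = (cos θ - 1) • C := by
    simp [D, Matrix.mul_add, ← Matrix.mul_assoc, show Uᵀ * U = 1 from hU, hUV]
  have hVD : Vᵀ * D = sin θ • 1 := by
    simp [D, Matrix.mul_add, ← Matrix.mul_assoc, hVU, hV]
  have hDD : Dᵀ * D = (2 - 2 * cos θ) • (1 : Matrix k k ℝ) := by
    calc Dᵀ * D = (cos θ - 1) • (Cᵀ * (Uᵀ * D)) + sin θ • (Vᵀ * D) := by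
          simp only [D, transpose_add, transpose_smul, transpose_mul, Matrix.add_mul,
            Matrix.smul_mul, Matrix.mul_assoc]
      _ = (2 - 2 * cos θ) • 1 := by
          rw [hUD, hVD, Matrix.mul_smul, hC]
          linear_combination (norm := module) sin_sq_add_cos_sq θ • (1 : Matrix k k ℝ)
  calc (U + D * Cᵀ)ᵀ * (U + D * Cᵀ)
      = Uᵀ * U + Uᵀ * D * Cᵀ + C * (Uᵀ * D)ᵀ + C * (Dᵀ * D) * Cᵀ := by
        simp only [transpose_add, transpose_mul, transpose_transpose, Matrix.mul_add,
          Matrix.add_mul, Matrix.mul_assoc]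
        abel
    _ = 1 := by
        rw [show Uᵀ * U = 1 from hU, hUD, hDD]
        simp only [transpose_smul, Matrix.smul_mul, Matrix.mul_smul, Matrix.mul_one]
        module

lemma trace_eq_zero_and_le_of_isLocalMinOn {H : Matrix n n ℝ} (hH : H.IsSymm) {U : Matrix n r ℝ}
    (hmin : IsLocalMinOn (traceForm H) (stiefel n r) U) (hU : U ∈ stiefel n r)
    {C : Matrix r k ℝ} {V : Matrix n k ℝ} (hC : Cᵀ * C = 1) (hV : Vᵀ * V = 1)
    (hUV : Uᵀ * V = 0) :
    (Vᵀ * H * U * C).trace = 0 ∧ (Cᵀ * (Uᵀ * H * U) * C).trace ≤ (Vᵀ * H * V).trace := by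
  have hcurve : Tendsto (planeRotation U C V) (𝓝 0) (𝓝[stiefel n r] U) :=
    tendsto_nhdsWithin_iff.2 ⟨continuous_planeRotation.tendsto' 0 U planeRotation_zero,
      .of_forall (planeRotation_mem_stiefel hU hC hV hUV)⟩
  have hnonneg : ∀ᶠ θ in 𝓝 0, 0 ≤ sin θ ^ 2 * ((Vᵀ * H * V).trace
      - (Cᵀ * (Uᵀ * H * U) * C).trace) + 2 * sin θ * cos θ * (Vᵀ * H * U * C).trace := by
    filter_upwards [hcurve.eventually hmin] with θ hθ
    rw [traceForm_planeRotation hH V hC] at hθ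
    linarith
  obtain ⟨hfirst, hsecond⟩ := eq_zero_and_nonneg_of_eventually_nonneg hnonneg
  exact ⟨hfirst, sub_nonneg.1 hsecond⟩

lemma dotProduct_eq_zero_and_le_of_isLocalMinOn {H : Matrix n n ℝ} (hH : H.IsSymm)
    {U : Matrix n r ℝ} (hmin : IsLocalMinOn (traceForm H) (stiefel n r) U) (hU : U ∈ stiefel n r)
    {c : r → ℝ} (hc : c ⬝ᵥ c = 1) {v : n → ℝ} (hv : Uᵀ *ᵥ v = 0) :
    v ⬝ᵥ (H * U) *ᵥ c = 0 ∧ (v ⬝ᵥ v) * (c ⬝ᵥ (Uᵀ * H * U) *ᵥ c) ≤ v ⬝ᵥ H *ᵥ v := by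
  rcases eq_or_ne v 0 with rfl | hv0
  · simp
  have hvv : 0 < v ⬝ᵥ v := lt_of_le_of_ne (dotProduct_self_star_nonneg v) (by
    simpa [eq_comm] using hv0)
  set ν := √(v ⬝ᵥ v)
  have hν : 0 < ν := sqrt_pos.2 hvv
  have hν2 : ν ^ 2 = v ⬝ᵥ v := sq_sqrt hvv.le
  obtain ⟨h1, h2⟩ := trace_eq_zero_and_le_of_isLocalMinOn hH hmin hU
    (transpose_replicateCol_mul_self hc)
    (transpose_replicateCol_mul_self (x := ν⁻¹ • v)
      (by rw [smul_dotProduct, dotProduct_smul, ← hν2, smul_eq_mul, smul_eq_mul]; field_simp))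
    (by rw [← replicateCol_mulVec, mulVec_smul, hv, smul_zero, replicateCol_zero])
  rw [Matrix.mul_assoc _ H U, trace_transpose_replicateCol_mul_replicateCol,
    smul_dotProduct, smul_eq_mul, mul_eq_zero] at h1
  rw [trace_transpose_replicateCol_mul_replicateCol, trace_transpose_replicateCol_mul_replicateCol,
    mulVec_smul, smul_dotProduct, dotProduct_smul, smul_eq_mul, smul_eq_mul] at h2
  refine ⟨h1.resolve_left (inv_ne_zero hν.ne'), ?_⟩
  rw [← hν2]
  field_simp at h2
  linarith

lemma mul_eq_mul_of_isLocalMinOn {H : Matrix n n ℝ} (hH : H.IsSymm) {U : Matrix n r ℝ}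
    (hmin : IsLocalMinOn (traceForm H) (stiefel n r) U) (hU : U ∈ stiefel n r) :
    H * U = U * (Uᵀ * H * U) := by
  set K := H * U - U * (Uᵀ * H * U)
  have hUK : Uᵀ * K = 0 := by
    simp only [K, Matrix.mul_sub, ← Matrix.mul_assoc, show Uᵀ * U = 1 from hU, Matrix.one_mul,
      sub_self]
  suffices hcol : ∀ j, K *ᵥ Pi.single j 1 = 0 by
    refine sub_eq_zero.1 (show K = 0 from ?_)
    ext i j
    simpa [mulVec_single_one] using congrFun (hcol j) i
  intro j
  set v := K *ᵥ Pi.single j 1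
  have hv : Uᵀ *ᵥ v = 0 := by rw [mulVec_mulVec, hUK, zero_mulVec]
  have h := (dotProduct_eq_zero_and_le_of_isLocalMinOn hH hmin hU (c := Pi.single j 1)
    (by simp) hv).1
  rw [← sub_add_cancel (H * U) (U * (Uᵀ * H * U)), add_mulVec, dotProduct_add, ← mulVec_mulVec,
    dotProduct_mulVec v U, ← mulVec_transpose, hv, zero_dotProduct, add_zero] at h
  exact dotProduct_self_eq_zero.1 h

open scoped MatrixOrder in
lemma IsSymm.exists_eigenvector_posSemidef_sub [Nonempty r] {M : Matrix r r ℝ} (hM : M.IsSymm) :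
    ∃ (μ : ℝ) (c : r → ℝ), c ⬝ᵥ c = 1 ∧ M *ᵥ c = μ • c ∧ (μ • 1 - M).PosSemidef := by
  have hM' : M.IsHermitian := isHermitian_iff_isSymm.2 hM
  obtain ⟨i, hi⟩ := Finite.exists_max hM'.eigenvalues
  refine ⟨hM'.eigenvalues i, hM'.eigenvectorBasis i, ?_, hM'.mulVec_eigenvectorBasis i, ?_⟩
  · have h := real_inner_self_eq_norm_sq (hM'.eigenvectorBasis i)
    rw [EuclideanSpace.inner_eq_star_dotProduct, hM'.eigenvectorBasis.orthonormal.1 i] at h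
    simpa using h
  · rw [← Algebra.algebraMap_eq_smul_one, ← Matrix.le_iff]
    refine le_algebraMap_of_spectrum_le ?_ hM'
    rw [hM'.spectrum_real_eq_range_eigenvalues]
    rintro _ ⟨j, rfl⟩
    exact hi j

lemma transpose_mul_self_sub_projection {U W : Matrix n r ℝ} (hU : U ∈ stiefel n r)
    (hW : W ∈ stiefel n r) :
    (W - U * (Uᵀ * W))ᵀ * (W - U * (Uᵀ * W)) = 1 - (Uᵀ * W)ᵀ * (Uᵀ * W) := by
  have hU' : Uᵀ * U = 1 := hU
  have hW' : Wᵀ * W = 1 := hW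
  simp only [transpose_sub, transpose_mul, transpose_transpose, Matrix.sub_mul, Matrix.mul_sub,
    Matrix.mul_assoc, hW']
  simp only [← Matrix.mul_assoc Uᵀ U, hU', Matrix.one_mul]
  abel

lemma transpose_mul_sub_projection {U : Matrix n r ℝ} (hU : U ∈ stiefel n r)
    (W : Matrix n r ℝ) : Uᵀ * (W - U * (Uᵀ * W)) = 0 := by
  rw [Matrix.mul_sub, ← Matrix.mul_assoc, show Uᵀ * U = 1 from hU, Matrix.one_mul, sub_self]

lemma traceForm_eq_add_of_mul_eq_mul {H : Matrix n n ℝ} (hH : H.IsSymm) {U : Matrix n r ℝ}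
    (hU : U ∈ stiefel n r) (hHU : H * U = U * (Uᵀ * H * U)) (W : Matrix n r ℝ) :
    traceForm H W = ((Uᵀ * W)ᵀ * (Uᵀ * H * U) * (Uᵀ * W)).trace
      + ((W - U * (Uᵀ * W))ᵀ * H * (W - U * (Uᵀ * W))).trace := by
  set M := Uᵀ * H * U
  set A := Uᵀ * W
  set B := W - U * A
  have hUB : Uᵀ * B = 0 := transpose_mul_sub_projection hU W
  have hBU : Bᵀ * U = 0 := by rw [← transpose_transpose U, ← transpose_mul, hUB, transpose_zero]
  have hUHX (X : Matrix n r ℝ) : Uᵀ * (H * X) = M * (Uᵀ * X) := by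
    have hMt : Mᵀ = M := by
      simp only [M, transpose_mul, transpose_transpose, hH.eq, Matrix.mul_assoc]
    rw [← Matrix.mul_assoc, ← transpose_transpose (Uᵀ * H), transpose_mul, transpose_transpose,
      hH.eq, hHU, transpose_mul, hMt, Matrix.mul_assoc]
  have hBHU : Bᵀ * (H * (U * A)) = 0 := by
    rw [← Matrix.mul_assoc H U A, hHU, Matrix.mul_assoc, ← Matrix.mul_assoc Bᵀ U, hBU,
      Matrix.zero_mul]
  rw [traceForm, show W = U * A + B from (add_sub_cancel _ _).symm]
  simp only [transpose_add, transpose_mul, Matrix.add_mul, Matrix.mul_add, Matrix.mul_assoc,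
    trace_add, hUHX, hBHU, hUB, ← Matrix.mul_assoc Uᵀ U, show Uᵀ * U = 1 from hU,
    Matrix.one_mul, Matrix.mul_zero, add_zero, zero_add]

lemma traceForm_le_of_spectral_gap {H : Matrix n n ℝ} (hH : H.IsSymm) {U : Matrix n r ℝ}
    (hU : U ∈ stiefel n r) (hHU : H * U = U * (Uᵀ * H * U)) {μ : ℝ}
    (hM : (μ • 1 - Uᵀ * H * U).PosSemidef)
    (hgap : ∀ v, Uᵀ *ᵥ v = 0 → μ * (v ⬝ᵥ v) ≤ v ⬝ᵥ H *ᵥ v) {W : Matrix n r ℝ}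
    (hW : W ∈ stiefel n r) : traceForm H U ≤ traceForm H W := by
  have hsplit := traceForm_eq_add_of_mul_eq_mul hH hU hHU W
  set M := Uᵀ * H * U
  set A := Uᵀ * W
  set B := W - U * A
  have hBB : Bᵀ * B = 1 - Aᵀ * A := transpose_mul_self_sub_projection hU hW
  have hAA : ((μ • 1 - M) * (1 - A * Aᵀ)).trace
      = μ * (Bᵀ * B).trace - M.trace + (Aᵀ * M * A).trace := by
    rw [hBB, trace_mul_cycle Aᵀ M A, trace_mul_comm (A * Aᵀ), trace_sub, trace_mul_comm Aᵀ]
    simp only [Matrix.sub_mul, Matrix.mul_sub, Matrix.smul_mul, Matrix.one_mul, Matrix.mul_one,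
      trace_sub, trace_smul, smul_eq_mul]
    ring
  have hnonneg : 0 ≤ ((μ • 1 - M) * (1 - A * Aᵀ)).trace := by
    -- `1 - A * Aᵀ = Xᵀ * X` with `X = U - W * Aᵀ`
    have hWU : Wᵀ * U = Aᵀ := by rw [transpose_mul, transpose_transpose]
    have h := transpose_mul_self_sub_projection hW hU
    rw [hWU, transpose_transpose] at h
    rw [← h]
    exact PosSemidef.trace_mul_transpose_mul_self_nonneg hM _
  have := trace_transpose_mul_self_mul_le hgap (transpose_mul_sub_projection hU W)
  change M.trace ≤ _
  linarith

theorem isMinOn_traceForm_of_isLocalMinOn {H : Matrix n n ℝ} (hH : H.IsSymm) {U : Matrix n r ℝ}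
    (hU : U ∈ stiefel n r) (hmin : IsLocalMinOn (traceForm H) (stiefel n r) U) :
    IsMinOn (traceForm H) (stiefel n r) U := by
  cases isEmpty_or_nonempty r
  · exact isMinOn_iff.2 fun W _ => by simp [traceForm, Matrix.trace]
  have hM : (Uᵀ * H * U).IsSymm := by
    simp only [IsSymm, transpose_mul, transpose_transpose, hH.eq, Matrix.mul_assoc]
  obtain ⟨μ, c, hc, hMc, hμ⟩ := IsSymm.exists_eigenvector_posSemidef_sub hM
  refine isMinOn_iff.2 fun W hW => traceForm_le_of_spectral_gap hH hU
    (mul_eq_mul_of_isLocalMinOn hH hmin hU) hμ (fun v hv => ?_) hW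
  have h := (dotProduct_eq_zero_and_le_of_isLocalMinOn hH hmin hU hc hv).2
  rwa [hMc, dotProduct_smul, hc, smul_eq_mul, mul_one, mul_comm] at h

lemma isMinOn_traceForm_of_isMinOn_max {H G : Matrix n n ℝ} (hH : H.IsSymm) {U : Matrix n r ℝ}
    (hU : U ∈ stiefel n r)
    (hopt : IsMinOn (fun V => max (traceForm H V) (traceForm G V)) (stiefel n r) U)
    (hlt : traceForm G U < traceForm H U) : IsMinOn (traceForm H) (stiefel n r) U :=
  isMinOn_traceForm_of_isLocalMinOn hH hU
    (isLocalMinOn_of_isMinOn_max_of_lt hopt (continuous_traceForm G).continuousWithinAt hlt)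

/-- Fairness of the fair-PCA minimax solution: if both trace objectives are
nonnegative on the Stiefel manifold with minimum value `0`, then any minimizer
`U_*` of `max{Tr(UᵀH_AU), Tr(UᵀH_BU)}` equalizes the two traces. -/
theorem fairPCA_minimax_equalizes
    (n r : ℕ) (HA HB : Matrix (Fin n) (Fin n) ℝ)
    (hHA : HA.IsSymm) (hHB : HB.IsSymm)
    (hAnonneg : ∀ U : Matrix (Fin n) (Fin r) ℝ, Uᵀ * U = 1 →
      0 ≤ Matrix.trace (Uᵀ * HA * U))
    (hBnonneg : ∀ U : Matrix (Fin n) (Fin r) ℝ, Uᵀ * U = 1 →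
      0 ≤ Matrix.trace (Uᵀ * HB * U))
    (hAmin : ∃ U : Matrix (Fin n) (Fin r) ℝ, Uᵀ * U = 1 ∧
      Matrix.trace (Uᵀ * HA * U) = 0)
    (hBmin : ∃ U : Matrix (Fin n) (Fin r) ℝ, Uᵀ * U = 1 ∧
      Matrix.trace (Uᵀ * HB * U) = 0)
    (Ustar : Matrix (Fin n) (Fin r) ℝ) (hUstar : Ustarᵀ * Ustar = 1)
    (hopt : ∀ U : Matrix (Fin n) (Fin r) ℝ, Uᵀ * U = 1 →
      max (Matrix.trace (Ustarᵀ * HA * Ustar)) (Matrix.trace (Ustarᵀ * HB * Ustar))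
        ≤ max (Matrix.trace (Uᵀ * HA * U)) (Matrix.trace (Uᵀ * HB * U))) :
    Matrix.trace (Ustarᵀ * HA * Ustar) = Matrix.trace (Ustarᵀ * HB * Ustar) := by
  have hAB : IsMinOn (fun U => max (traceForm HA U) (traceForm HB U)) (stiefel _ _) Ustar :=
    isMinOn_iff.2 hopt
  have hBA : IsMinOn (fun U => max (traceForm HB U) (traceForm HA U)) (stiefel _ _) Ustar :=
    isMinOn_iff.2 fun U hU => by
      rw [max_comm, max_comm (traceForm HB U)]
      exact hopt U hU
  obtain ⟨VA, hVA, hVA0⟩ := hAmin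
  obtain ⟨VB, hVB, hVB0⟩ := hBmin
  rcases lt_trichotomy (traceForm HA Ustar) (traceForm HB Ustar) with hlt | heq | hgt
  · have hB := isMinOn_iff.1 (isMinOn_traceForm_of_isMinOn_max hHB hUstar hBA hlt) VB hVB
    have hA := hAnonneg Ustar hUstar
    unfold traceForm at hB hlt
    linarith
  · exact heq
  · have hA := isMinOn_iff.1 (isMinOn_traceForm_of_isMinOn_max hHA hUstar hAB hgt) VA hVA
    have hB := hBnonneg Ustar hUstar
    unfold traceForm at hA hgt
    linarith
end

section
/- For a symmetric matrix H ∈ ℝ^{n×n}, the minimum of Tr(Uᵀ H U) over all U ∈ ℝ^{n×r} with UᵀU = I_r equals the sum of the r smallest eigenvalues of H (Ky Fan's minimum principle). -/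
/-!
Conjugating by the orthogonal `P` reduces to `H = diagonal μ`, where
`Tr(Vᵀ diag(μ) V) = ∑ᵢ μᵢ sᵢ` with `sᵢ = (V Vᵀ)ᵢᵢ`. For orthonormal columns `V Vᵀ` is a symmetric
idempotent, so `0 ≤ sᵢ ≤ 1`, and `∑ᵢ sᵢ = Tr(Vᵀ V) = r`. Among such weights the sum `∑ᵢ μᵢ sᵢ`
is smallest on the indicator of the `r` smallest eigenvalues, which is attained by the first `r`
columns of `P`.
-/

open Matrix BigOperators

theorem Fin.sum_castLE_eq_sum_ite {M : Type*} [AddCommMonoid M] {n r : ℕ} (hr : r ≤ n)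
    (f : Fin n → M) :
    ∑ j : Fin r, f (Fin.castLE hr j) = ∑ i : Fin n, if (i : ℕ) < r then f i else 0 := by
  rw [← Finset.sum_filter]
  refine (Finset.sum_map Finset.univ (Fin.castLEEmb hr) f).symm.trans ?_
  congr 1
  ext i
  simp only [Finset.mem_map, Finset.mem_univ, true_and, Finset.mem_filter, Fin.castLEEmb_apply]
  exact ⟨fun ⟨j, hj⟩ => hj ▸ j.isLt, fun hi => ⟨⟨i, hi⟩, rfl⟩⟩

theorem sum_castLE_le_sum_mul_of_monotone {n r : ℕ} (hr : r ≤ n) {μ : Fin n → ℝ}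
    (hμ : Monotone μ) {s : Fin n → ℝ} (hs : ∀ i, s i ∈ Set.Icc 0 1) (hsum : ∑ i, s i = r) :
    ∑ j : Fin r, μ (Fin.castLE hr j) ≤ ∑ i, μ i * s i := by
  rcases Nat.eq_zero_or_pos r with rfl | hr0
  · have hs0 : ∀ i, s i = 0 := fun i =>
      (Finset.sum_eq_zero_iff_of_nonneg fun i _ => (hs i).1).mp (by simpa using hsum) i
        (Finset.mem_univ i)
    simp [hs0]
  set t : Fin n → ℝ := fun i => if (i : ℕ) < r then 1 else 0
  -- a threshold between the first `r` values of `μ` and the rest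
  set c := μ ⟨r - 1, by omega⟩
  have hterm : ∀ i, 0 ≤ (μ i - c) * (s i - t i) := by
    intro i
    by_cases hi : (i : ℕ) < r
    · have : μ i ≤ c := hμ (Fin.le_def.mpr (by change (i : ℕ) ≤ r - 1; omega))
      simp only [t, hi, if_true]
      exact mul_nonneg_of_nonpos_of_nonpos (by linarith) (by linarith [(hs i).2])
    · have : c ≤ μ i := hμ (Fin.le_def.mpr (by change r - 1 ≤ (i : ℕ); omega))
      simp only [t, hi, if_false]
      exact mul_nonneg (by linarith) (by linarith [(hs i).1])
  have ht : ∑ i, t i = r := by simp [t, ← Fin.sum_castLE_eq_sum_ite hr]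
  have hμt : ∑ j : Fin r, μ (Fin.castLE hr j) = ∑ i, μ i * t i := by
    rw [Fin.sum_castLE_eq_sum_ite hr]
    simp [t]
  have hnonneg := Finset.sum_nonneg fun i (_ : i ∈ Finset.univ) => hterm i
  simp only [sub_mul, mul_sub, Finset.sum_sub_distrib, ← Finset.mul_sum, hsum, ht] at hnonneg
  linarith

namespace Matrix

variable {m k R : Type*} [Fintype m] [Fintype k]

theorem trace_transpose_mul_diagonal_mul [CommSemiring R] [DecidableEq m] (d : m → R)
    (V : Matrix m k R) : trace (Vᵀ * diagonal d * V) = ∑ i, d i * (V * Vᵀ) i i := by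
  rw [trace_mul_cycle]
  simp [trace, mul_diagonal, mul_comm]

theorem transpose_submatrix_mul_mul_submatrix [CommSemiring R] {l : Type*} (P M : Matrix m m R)
    (e : l → m) : (P.submatrix id e)ᵀ * M * P.submatrix id e = (Pᵀ * M * P).submatrix e e := by
  rw [transpose_submatrix, ← submatrix_id_id M, ← submatrix_mul _ _ _ _ _ Function.bijective_id,
    ← submatrix_mul _ _ _ _ _ Function.bijective_id, submatrix_id_id]

theorem diag_mem_Icc_of_isSymm_of_isIdempotentElem {Q : Matrix m m ℝ} (hQ : Q.IsSymm)
    (hQQ : IsIdempotentElem Q) (i : m) : Q i i ∈ Set.Icc 0 1 := by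
  have hsq : Q i i ^ 2 ≤ Q i i := calc
    Q i i ^ 2 ≤ ∑ j, Q i j ^ 2 :=
      Finset.single_le_sum (f := fun j => Q i j ^ 2) (fun _ _ => sq_nonneg _) (Finset.mem_univ i)
    _ = (Q * Q) i i := by
      simp only [mul_apply, sq]
      exact Finset.sum_congr rfl fun j _ => by rw [hQ.apply i j]
    _ = Q i i := by rw [hQQ.eq]
  constructor <;> nlinarith

variable [DecidableEq k] {V : Matrix m k ℝ}

theorem mul_transpose_self_diag_mem_Icc (hV : Vᵀ * V = 1) (i : m) :
    (V * Vᵀ) i i ∈ Set.Icc 0 1 := by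
  refine diag_mem_Icc_of_isSymm_of_isIdempotentElem ?_ ?_ i
  · simp [IsSymm, transpose_mul]
  · rw [IsIdempotentElem, Matrix.mul_assoc, ← Matrix.mul_assoc Vᵀ, hV, Matrix.one_mul]

theorem trace_mul_transpose_self (hV : Vᵀ * V = 1) : trace (V * Vᵀ) = Fintype.card k := by
  rw [trace_mul_comm, hV, trace_one]

end Matrix

theorem sum_castLE_le_trace_transpose_mul_diagonal_mul {n r : ℕ} (hr : r ≤ n) {μ : Fin n → ℝ}
    (hμ : Monotone μ) {V : Matrix (Fin n) (Fin r) ℝ} (hV : Vᵀ * V = 1) :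
    ∑ j : Fin r, μ (Fin.castLE hr j) ≤ trace (Vᵀ * diagonal μ * V) := by
  rw [trace_transpose_mul_diagonal_mul]
  refine sum_castLE_le_sum_mul_of_monotone hr hμ (mul_transpose_self_diag_mem_Icc hV) ?_
  simpa [trace] using trace_mul_transpose_self hV

theorem kyFan_min_principle_general
    (n r : ℕ) (hr : r ≤ n)
    (H : Matrix (Fin n) (Fin n) ℝ)
    (μ : Fin n → ℝ) (hμ : Monotone μ)
    (P : Matrix (Fin n) (Fin n) ℝ) (hP : Pᵀ * P = 1)
    (hdec : H = P * Matrix.diagonal μ * Pᵀ) :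
    IsLeast {x : ℝ | ∃ U : Matrix (Fin n) (Fin r) ℝ,
        Uᵀ * U = 1 ∧ x = Matrix.trace (Uᵀ * H * U)}
      (∑ i : Fin r, μ (Fin.castLE hr i)) := by
  have hP' : P * Pᵀ = 1 := mul_eq_one_comm.mp hP
  have hdiag : Pᵀ * H * P = diagonal μ := by
    rw [hdec, ← Matrix.mul_assoc, ← Matrix.mul_assoc, hP, Matrix.one_mul, Matrix.mul_assoc, hP,
      Matrix.mul_one]
  refine ⟨⟨P.submatrix id (Fin.castLE hr), ?_, ?_⟩, ?_⟩
  · rw [← Matrix.mul_one (P.submatrix id _)ᵀ, transpose_submatrix_mul_mul_submatrix,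
      Matrix.mul_one, hP, submatrix_one _ (Fin.castLE_injective hr)]
  · rw [transpose_submatrix_mul_mul_submatrix, hdiag,
      submatrix_diagonal _ _ (Fin.castLE_injective hr), trace_diagonal, Function.comp_def]
  · rintro _ ⟨U, hU, rfl⟩
    have hPU : (Pᵀ * U)ᵀ * (Pᵀ * U) = 1 := by
      rw [transpose_mul, transpose_transpose, Matrix.mul_assoc, ← Matrix.mul_assoc P, hP',
        Matrix.one_mul, hU]
    have hconj : Uᵀ * H * U = (Pᵀ * U)ᵀ * diagonal μ * (Pᵀ * U) := by
      rw [hdec]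
      simp only [transpose_mul, transpose_transpose, Matrix.mul_assoc]
    rw [hconj]
    exact sum_castLE_le_trace_transpose_mul_diagonal_mul hr hμ hPU

/-- Ky Fan's minimum principle: for a real symmetric `H = P diag(μ) Pᵀ` with
`μ` listed in increasing order and `P` orthogonal, the minimum of `Tr(Uᵀ H U)`
over matrices `U` with orthonormal columns equals the sum of the `r` smallest
eigenvalues of `H`. -/
theorem kyFan_min_principle
    (n r : ℕ) (hr : r ≤ n)
    (H : Matrix (Fin n) (Fin n) ℝ) (hH : H.IsSymm)
    (μ : Fin n → ℝ) (hμ : Monotone μ)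
    (P : Matrix (Fin n) (Fin n) ℝ) (hP : Pᵀ * P = 1) (hP' : P * Pᵀ = 1)
    (hdec : H = P * Matrix.diagonal μ * Pᵀ) :
    IsLeast {x : ℝ | ∃ U : Matrix (Fin n) (Fin r) ℝ,
        Uᵀ * U = 1 ∧ x = Matrix.trace (Uᵀ * H * U)}
      (∑ i : Fin r, μ (Fin.castLE hr i)) :=
  kyFan_min_principle_general n r hr H μ hμ P hP hdec
end
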